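/- arXiv:1012.4169 — 4 statements merged into one kernel-verified Lean document; each statement's English description precedes it below -/
import Mathlib

section
/- The function d_T is an extended pseudo-distance on multidimensional persistent homology groups: for all pairs (X,φ), (Y,ψ), (Z,χ) of topological spaces with continuous ℝⁿ-valued filtering functions and any integer k, one has (i) d_T(H_k^{(X,φ)}, H_k^{(Y,ψ)}) ≥ 0; (ii) d_T(H_k^{(X,φ)}, H_k^{(X,φ)}) = 0; (iii) d_T(H_k^{(X,φ)}, H_k^{(Y,ψ)}) = d_T(H_k^{(Y,ψ)}, H_k^{(X,φ)}); (iv) d_T(H_k^{(X,φ)}, H_k^{(Z,χ)}) ≤ d_T(H_k^{(X,φ)}, H_k^{(Y,ψ)}) + d_T(H_k^{(Y,ψ)}, H_k^{(Z,χ)}) (with values in [0,∞]). -/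
open CategoryTheory

/-- The "chains with coefficients in `G`" functor `S ↦ S →₀ G`. -/
@[simps]
noncomputable def coeffFunctor (G : Type) [AddCommGroup G] : Type ⥤ AddCommGrpCat where
  obj S := AddCommGrpCat.of (S →₀ G)
  map f := AddCommGrpCat.ofHom (Finsupp.mapDomain.addMonoidHom f)
  map_id S := AddCommGrpCat.hom_ext Finsupp.mapDomain.addMonoidHom_id
  map_comp f g := AddCommGrpCat.hom_ext (Finsupp.mapDomain.addMonoidHom_comp g f)

/-- The singular chain complex with coefficients in the abelian group `G`. -/
noncomputable def singularChainComplexFunctor (G : Type) [AddCommGroup G] :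
    TopCat.{0} ⥤ ChainComplex AddCommGrpCat ℕ :=
  TopCat.toSSet ⋙ ((SimplicialObject.whiskering (Type 0) AddCommGrpCat).obj (coeffFunctor G)) ⋙
    AlgebraicTopology.alternatingFaceMapComplex AddCommGrpCat

/-- Singular homology with coefficients in `G`, in degree `k : ℤ` (trivial in negative degrees). -/
noncomputable def singularHomologyFunctor (G : Type) [AddCommGroup G] (k : ℤ) :
    TopCat.{0} ⥤ AddCommGrpCat :=
  if 0 ≤ k then
    singularChainComplexFunctor G ⋙ HomologicalComplex.homologyFunctor AddCommGrpCat _ k.toNat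
  else (Functor.const _).obj (AddCommGrpCat.of PUnit)

/-- The sublevel set `X⟨φ ≼ u⟩`. -/
def sublevelSet {n : ℕ} {X : Type} (φ : X → Fin n → ℝ) (u : Fin n → ℝ) : Set X :=
  {x | ∀ i, φ x i ≤ u i}

/-- The sublevel set as a topological space. -/
def sublevelTop {n : ℕ} {X : Type} [TopologicalSpace X] (φ : X → Fin n → ℝ)
    (u : Fin n → ℝ) : TopCat.{0} :=
  TopCat.of (sublevelSet φ u)

/-- The inclusion of sublevel sets. -/
def sublevelIncl {n : ℕ} {X : Type} [TopologicalSpace X] (φ : X → Fin n → ℝ)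
    {u v : Fin n → ℝ} (h : ∀ i, u i ≤ v i) : sublevelTop φ u ⟶ sublevelTop φ v :=
  TopCat.ofHom (ContinuousMap.mk (Set.inclusion (fun _x hx i => le_trans (hx i) (h i)))
    (continuous_inclusion _))

/-- The multidimensional `k`-th persistent homology group of `(X, φ)` at `(u, v)`,
with coefficients in the abelian group `G`: the image of the homomorphism induced
in homology by the inclusion of sublevel sets. -/
noncomputable def persistentHomologyGroup (G : Type) [AddCommGroup G] (k : ℤ)
    {n : ℕ} {X : Type} [TopologicalSpace X] (φ : X → Fin n → ℝ)
    {u v : Fin n → ℝ} (h : ∀ i, u i ≤ v i) : Type :=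
  AddMonoidHom.range ((singularHomologyFunctor G k).map (sublevelIncl φ h)).hom

noncomputable instance (G : Type) [AddCommGroup G] (k : ℤ)
    {n : ℕ} {X : Type} [TopologicalSpace X] (φ : X → Fin n → ℝ)
    {u v : Fin n → ℝ} (h : ∀ i, u i ≤ v i) :
    AddCommGroup (persistentHomologyGroup G k φ h) := by
  unfold persistentHomologyGroup; infer_instance

/-- There is a surjective homomorphism from a subgroup of `A` onto `B`. -/
def ExistsSurjHomFromSubgroup (A B : Type) [AddCommGroup A] [AddCommGroup B] : Prop :=
  ∃ (S : AddSubgroup A) (f : S →+ B), Function.Surjective f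

/-- The set `E` of all `ε ≥ 0` such that, for every `(u,v) ∈ Δ⁺`, surjective homomorphisms
exist from a subgroup of `H_k^{(X,φ)}(u,v)` onto `H_k^{(Y,ψ)}(u-ε⃗,v+ε⃗)` and from a subgroup of
`H_k^{(Y,ψ)}(u,v)` onto `H_k^{(X,φ)}(u-ε⃗,v+ε⃗)`. -/
def dTSet (G : Type) [AddCommGroup G] (k : ℤ) {n : ℕ} {X Y : Type}
    [TopologicalSpace X] [TopologicalSpace Y]
    (φ : X → Fin n → ℝ) (ψ : Y → Fin n → ℝ) : Set ℝ :=
  {ε | ∃ hε : 0 ≤ ε, ∀ u v : Fin n → ℝ, ∀ h : ∀ i, u i < v i,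
    ExistsSurjHomFromSubgroup
      (persistentHomologyGroup G k φ (fun i => (h i).le))
      (persistentHomologyGroup G k ψ
        (u := fun i => u i - ε) (v := fun i => v i + ε)
        (fun i => by have := (h i).le; linarith)) ∧
    ExistsSurjHomFromSubgroup
      (persistentHomologyGroup G k ψ (fun i => (h i).le))
      (persistentHomologyGroup G k φ
        (u := fun i => u i - ε) (v := fun i => v i + ε)
        (fun i => by have := (h i).le; linarith))}

/-- The pseudo-distance `d_T` between the `k`-th persistent homology groups of `(X,φ)`
and `(Y,ψ)`: the infimum of the set `E` (`∞` if `E` is empty). -/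
noncomputable def dT (G : Type) [AddCommGroup G] (k : ℤ) {n : ℕ} {X Y : Type}
    [TopologicalSpace X] [TopologicalSpace Y]
    (φ : X → Fin n → ℝ) (ψ : Y → Fin n → ℝ) : ENNReal :=
  sInf (ENNReal.ofReal '' dTSet G k φ ψ)

/-- The sup-norm (max-norm) distance between two `ℝⁿ`-valued functions. -/
noncomputable def supNormDist {n : ℕ} {X : Type} (φ ψ : X → Fin n → ℝ) : ENNReal :=
  ⨆ (x : X) (i : Fin n), ENNReal.ofReal |φ x i - ψ x i|

/-- The natural pseudo-distance between `(X,φ)` and `(Y,ψ)`: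
`inf_h ‖φ - ψ ∘ h‖_∞` over all homeomorphisms `h : X → Y` (`∞` if none exists). -/
noncomputable def naturalPseudoDistance {n : ℕ} {X Y : Type}
    [TopologicalSpace X] [TopologicalSpace Y]
    (φ : X → Fin n → ℝ) (ψ : Y → Fin n → ℝ) : ENNReal :=
  ⨅ (h : X ≃ₜ Y), supNormDist φ (fun x => ψ (h x))

/-!
Every admissible `ε` for `(X,φ)` and `(Y,ψ)` gives `d_T ≤ ε`. The value `0` is admissible for a
pair and itself (take the identity), the admissibility condition is symmetric in the two pairs,
and if `a` is admissible for `φ, ψ` and `b` for `ψ, χ`, then `a + b` is admissible for `φ, χ`: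
surjections from subgroups compose, by pulling the second subgroup back along the first surjection.
-/

namespace ExistsSurjHomFromSubgroup

theorem refl (A : Type) [AddCommGroup A] : ExistsSurjHomFromSubgroup A A :=
  ⟨⊤, AddSubgroup.subtype ⊤, fun a => ⟨⟨a, AddSubgroup.mem_top a⟩, rfl⟩⟩

theorem trans {A B C : Type} [AddCommGroup A] [AddCommGroup B] [AddCommGroup C]
    (hAB : ExistsSurjHomFromSubgroup A B) (hBC : ExistsSurjHomFromSubgroup B C) :
    ExistsSurjHomFromSubgroup A C := by
  obtain ⟨S, f, hf⟩ := hAB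
  obtain ⟨T, g, hg⟩ := hBC
  let U := T.comap f
  let e : U ≃+ U.map S.subtype := U.equivMapOfInjective S.subtype S.subtype_injective
  let fU : U →+ T := (f.comp U.subtype).codRestrict T fun s => s.2
  have hfU : Function.Surjective fU := by
    intro t
    obtain ⟨s, hs⟩ := hf t
    exact ⟨⟨s, show f s ∈ T by simp [hs]⟩, Subtype.ext hs⟩
  exact ⟨U.map S.subtype, g.comp (fU.comp e.symm.toAddMonoidHom),
    hg.comp (hfU.comp e.symm.surjective)⟩

/-- Moves the bounds along propositional equalities such as `u - a - b = u - (a + b)`, which do not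
hold definitionally in `ℝ`. -/
theorem persistentHomologyGroup_congr {A : Type} [AddCommGroup A] (G : Type) [AddCommGroup G]
    (k : ℤ) {n : ℕ} {X : Type} [TopologicalSpace X] (φ : X → Fin n → ℝ)
    {u v u' v' : Fin n → ℝ} (hu : u = u') (hv : v = v')
    (h : ∀ i, u i ≤ v i) (h' : ∀ i, u' i ≤ v' i)
    (H : ExistsSurjHomFromSubgroup A (persistentHomologyGroup G k φ h)) :
    ExistsSurjHomFromSubgroup A (persistentHomologyGroup G k φ h') := by
  subst hu hv
  exact H

end ExistsSurjHomFromSubgroup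

open ExistsSurjHomFromSubgroup

section

variable (G : Type) [AddCommGroup G] (k : ℤ) {n : ℕ} {X Y Z : Type}
  [TopologicalSpace X] [TopologicalSpace Y] [TopologicalSpace Z]
  (φ : X → Fin n → ℝ) (ψ : Y → Fin n → ℝ) (χ : Z → Fin n → ℝ)

theorem zero_mem_dTSet_self : (0 : ℝ) ∈ dTSet G k φ φ := by
  refine ⟨le_rfl, fun u v h => ?_⟩
  constructor <;>
    exact persistentHomologyGroup_congr G k φ (u := u) (v := v) (by simp) (by simp) _ _ (refl _)

theorem dTSet_comm : dTSet G k φ ψ = dTSet G k ψ φ := by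
  ext ε
  constructor <;> exact fun ⟨hε, H⟩ => ⟨hε, fun u v h => (H u v h).symm⟩

variable {G k φ ψ χ} in
theorem add_mem_dTSet {a b : ℝ} (ha : a ∈ dTSet G k φ ψ) (hb : b ∈ dTSet G k ψ χ) :
    a + b ∈ dTSet G k φ χ := by
  obtain ⟨ha0, Ha⟩ := ha
  obtain ⟨hb0, Hb⟩ := hb
  refine ⟨add_nonneg ha0 hb0, fun u v h => ⟨?_, ?_⟩⟩
  · refine persistentHomologyGroup_congr G k χ (u := fun i => u i - a - b)
      (v := fun i => v i + a + b) (funext fun i => by ring) (funext fun i => by ring)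
      (fun i => by linarith [h i]) _ ?_
    exact (Ha u v h).1.trans (Hb _ _ fun i => by linarith [h i]).1
  · refine persistentHomologyGroup_congr G k φ (u := fun i => u i - b - a)
      (v := fun i => v i + b + a) (funext fun i => by ring) (funext fun i => by ring)
      (fun i => by linarith [h i]) _ ?_
    exact (Hb u v h).2.trans (Ha _ _ fun i => by linarith [h i]).2

variable {G k φ ψ} in
theorem dT_le_ofReal {ε : ℝ} (hε : ε ∈ dTSet G k φ ψ) : dT G k φ ψ ≤ ENNReal.ofReal ε :=
  sInf_le ⟨ε, hε, rfl⟩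

theorem dT_self : dT G k φ φ = 0 :=
  le_antisymm (by simpa using dT_le_ofReal (zero_mem_dTSet_self G k φ)) zero_le

theorem dT_comm : dT G k φ ψ = dT G k ψ φ := by
  rw [dT, dT, dTSet_comm]

theorem dT_le_add : dT G k φ χ ≤ dT G k φ ψ + dT G k ψ χ := by
  simp only [dT, ENNReal.sInf_add, ENNReal.add_sInf]
  refine le_iInf₂ ?_
  rintro _ ⟨b, hb, rfl⟩
  refine le_iInf₂ ?_
  rintro _ ⟨a, ha, rfl⟩
  rw [← ENNReal.ofReal_add ha.1 hb.1]
  exact dT_le_ofReal (add_mem_dTSet ha hb)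

end

theorem dT_isExtendedPseudoDistance_general (G : Type) [AddCommGroup G] (k : ℤ) (n : ℕ)
    {X Y Z : Type} [TopologicalSpace X] [TopologicalSpace Y] [TopologicalSpace Z]
    (φ : X → Fin n → ℝ) (ψ : Y → Fin n → ℝ) (χ : Z → Fin n → ℝ) :
    0 ≤ dT G k φ ψ ∧
    dT G k φ φ = 0 ∧
    dT G k φ ψ = dT G k ψ φ ∧
    dT G k φ χ ≤ dT G k φ ψ + dT G k ψ χ :=
  ⟨zero_le, dT_self G k φ, dT_comm G k φ ψ, dT_le_add G k φ ψ χ⟩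

/-- **Theorem (The function `d_T` is an extended pseudo-distance).**
For all pairs `(X,φ)`, `(Y,ψ)`, `(Z,χ)` of topological spaces with continuous `ℝⁿ`-valued
filtering functions and any integer `k`: `d_T` is non-negative, vanishes on two equal pairs,
is symmetric, and satisfies the triangle inequality (with values in `[0,∞]`). -/
theorem dT_isExtendedPseudoDistance (G : Type) [AddCommGroup G] (k : ℤ) (n : ℕ)
    {X Y Z : Type} [TopologicalSpace X] [TopologicalSpace Y] [TopologicalSpace Z]
    (φ : X → Fin n → ℝ) (ψ : Y → Fin n → ℝ) (χ : Z → Fin n → ℝ)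
    (hφ : Continuous φ) (hψ : Continuous ψ) (hχ : Continuous χ) :
    0 ≤ dT G k φ ψ ∧
    dT G k φ φ = 0 ∧
    dT G k φ ψ = dT G k ψ φ ∧
    dT G k φ χ ≤ dT G k φ ψ + dT G k ψ χ :=
  dT_isExtendedPseudoDistance_general G k n φ ψ χ
end

section
/- Let X, Y be two homeomorphic compact topological spaces endowed with continuous functions φ: X → ℝⁿ and ψ: Y → ℝⁿ. Assume h: X → Y is a homeomorphism such that ‖φ − ψ∘h‖_∞ ≤ ε. Then for every pair (u,v) ∈ Δ⁺ there exist a subgroup S of H_k^{(X,φ)}(u,v) and a surjective homomorphism f: S → H_k^{(Y,ψ)}(u−ε⃗, v+ε⃗), where ε⃗ = (ε,…,ε) ∈ ℝⁿ. -/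
open CategoryTheory

/-!
Since `ψ ∘ h` is `ε`-close to `φ`, `h` maps `X⟨φ ≼ v⟩` into `Y⟨ψ ≼ v + ε⃗⟩` and `h⁻¹` maps
`Y⟨ψ ≼ u − ε⃗⟩` into `X⟨φ ≼ u⟩`, so the inclusion `Y⟨ψ ≼ u − ε⃗⟩ ⊆ Y⟨ψ ≼ v + ε⃗⟩` factors through
`X⟨φ ≼ u⟩ ⊆ X⟨φ ≼ v⟩`. In homology this gives `δ = γ ∘ β ∘ α` with `β` the map whose image is
`H_k^{(X,φ)}(u,v)` and `δ` the one whose image is `H_k^{(Y,ψ)}(u − ε⃗, v + ε⃗)`; then `γ` maps the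
subgroup `range (β ∘ α)` of `range β` onto `range δ`.
-/

open Set

theorem AddMonoidHom.exists_surjective_range_of_comp_eq {A B C D : Type*} [AddGroup A]
    [AddGroup B] [AddGroup C] [AddGroup D] (α : A →+ B) (β : B →+ C) (γ : C →+ D) (δ : A →+ D)
    (hδ : γ.comp (β.comp α) = δ) :
    ∃ (S : AddSubgroup β.range) (f : S →+ δ.range), Function.Surjective f := by
  subst hδ
  refine ⟨(β.comp α).range.addSubgroupOf β.range,
    ((γ.comp β.range.subtype).comp (AddSubgroup.subtype _)).codRestrict _ ?_, ?_⟩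
  · rintro ⟨⟨_, _⟩, a, ha⟩
    exact ⟨a, congrArg γ ha⟩
  · rintro ⟨_, a, rfl⟩
    exact ⟨⟨⟨β (α a), α a, rfl⟩, a, rfl⟩, rfl⟩

section Sublevel

variable {n : ℕ} {X Y : Type} {φ : X → Fin n → ℝ} {ψ : Y → Fin n → ℝ}

theorem mapsTo_sublevelSet {g : X → Y} {u w : Fin n → ℝ}
    (hg : ∀ x i, ψ (g x) i - φ x i ≤ w i - u i) :
    MapsTo g (sublevelSet φ u) (sublevelSet ψ w) :=
  fun x hx i => by linarith [hx i, hg x i]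

variable [TopologicalSpace X] [TopologicalSpace Y]

def sublevelMap (g : C(X, Y)) {u w : Fin n → ℝ}
    (hg : MapsTo g (sublevelSet φ u) (sublevelSet ψ w)) :
    sublevelTop φ u ⟶ sublevelTop ψ w :=
  TopCat.ofHom ⟨hg.restrict g _ _, g.continuous.restrict hg⟩

theorem sublevelMap_symm_comp_sublevelIncl_comp_sublevelMap (h : X ≃ₜ Y)
    {u' u v w : Fin n → ℝ} (hsymm : MapsTo h.symm (sublevelSet ψ u') (sublevelSet φ u))
    (huv : ∀ i, u i ≤ v i) (hmaps : MapsTo h (sublevelSet φ v) (sublevelSet ψ w))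
    (hu'w : ∀ i, u' i ≤ w i) :
    sublevelMap (h.symm : C(Y, X)) hsymm ≫ sublevelIncl φ huv ≫ sublevelMap (h : C(X, Y)) hmaps =
      sublevelIncl ψ hu'w := by
  ext y
  exact Subtype.ext (h.apply_symm_apply y.1)

end Sublevel

/-- **Lemma.** Let `X`, `Y` be two homeomorphic compact topological spaces endowed with
continuous functions `φ : X → ℝⁿ`, `ψ : Y → ℝⁿ`. Assume `h : X → Y` is a homeomorphism such
that `‖φ − ψ∘h‖_∞ ≤ ε`. Then for every pair `(u,v) ∈ Δ⁺` there exist a subgroup `S` of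
`H_k^{(X,φ)}(u,v)` and a surjective homomorphism `f : S → H_k^{(Y,ψ)}(u−ε⃗, v+ε⃗)`. -/
theorem exists_surjHom_of_homeomorph (G : Type) [AddCommGroup G] (k : ℤ) (n : ℕ)
    {X Y : Type} [TopologicalSpace X] [TopologicalSpace Y]
    (φ : X → Fin n → ℝ) (ψ : Y → Fin n → ℝ)
    (h : X ≃ₜ Y) (ε : ℝ) (hε : 0 ≤ ε)
    (hnorm : ∀ x : X, ∀ i : Fin n, |φ x i - ψ (h x) i| ≤ ε)
    (u v : Fin n → ℝ) (huv : ∀ i, u i < v i) :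
    ∃ (S : AddSubgroup (persistentHomologyGroup G k φ (fun i => (huv i).le)))
      (f : S →+ persistentHomologyGroup G k ψ
        (u := fun i => u i - ε) (v := fun i => v i + ε)
        (fun i => by have := (huv i).le; linarith)),
      Function.Surjective f := by
  have hsymm : MapsTo h.symm (sublevelSet ψ fun i => u i - ε) (sublevelSet φ u) :=
    mapsTo_sublevelSet fun y i => by
      have := (abs_le.mp (hnorm (h.symm y) i)).2
      rw [h.apply_symm_apply] at this
      linarith
  have hmaps : MapsTo h (sublevelSet φ v) (sublevelSet ψ fun i => v i + ε) :=
    mapsTo_sublevelSet fun x i => by linarith [(abs_le.mp (hnorm x i)).1]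
  have hcomp := sublevelMap_symm_comp_sublevelIncl_comp_sublevelMap h hsymm
    (fun i => (huv i).le) hmaps (fun i => by linarith [huv i])
  let F := singularHomologyFunctor G k
  exact AddMonoidHom.exists_surjective_range_of_comp_eq (F.map (sublevelMap _ hsymm)).hom _
    (F.map (sublevelMap _ hmaps)).hom _ <| by
      rw [← hcomp, F.map_comp, F.map_comp, AddCommGrpCat.hom_comp, AddCommGrpCat.hom_comp,
        AddMonoidHom.comp_assoc]
end

section
/- Let A = ⨁_{i∈ℕ} ℤ be the direct sum of countably many copies of the integers and let B = ℤ/2ℤ ⊕ A. Then there exists a surjective group homomorphism from A onto B and a surjective group homomorphism from B onto A, but A and B are not isomorphic as groups (B has a nonzero element of finite order while A is torsion-free). Consequently, the pseudo-distance d_T is not a distance: two topological spaces whose k-th homology groups are A and B respectively, each endowed with the identically zero filtering function, have d_T equal to 0 between their k-th persistent homology groups although these groups are not isomorphic. -/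
open CategoryTheory

/-!
Splitting off one coordinate gives `ℕ →₀ ℤ ≃+ ℤ × (ℕ →₀ ℤ)`; reducing that coordinate mod 2
yields a surjection `A → B`, and the projection a surjection `B → A`. Yet `(1, 0)` is
2-torsion in `B`, while `A` is torsion-free, so `A ≄ B`.

For a constant filtering function `c`, a sublevel set at `u` is the whole space when `c ≤ u`
and empty otherwise. In the first case the inclusions of sublevel sets are identities and the
persistent homology group is `H_k` of the space; in the second it is trivial. So at `ε = 0` the
surjections required by `d_T` are the given ones between `H_k(X)` and `H_k(Y)`, or maps onto
the trivial group: `0 ∈ E`, and `d_T = 0`.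
-/

open Function

namespace Finsupp

noncomputable def optionAddEquiv {α M : Type*} [AddZeroClass M] :
    (Option α →₀ M) ≃+ M × (α →₀ M) :=
  { optionEquiv with map_add' := fun f g => by ext <;> simp [some_add] }

theorem exists_surjective_nat_prod {M N : Type*} [AddCommMonoid M] [AddCommMonoid N]
    (g : M →+ N) (hg : Surjective g) : ∃ f : (ℕ →₀ M) →+ N × (ℕ →₀ M), Surjective f :=
  let e : (ℕ →₀ M) ≃+ M × (ℕ →₀ M) :=
    (Finsupp.domCongr (Denumerable.eqv (Option ℕ)).symm).trans optionAddEquiv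
  ⟨(g.prodMap (AddMonoidHom.id _)).comp e.toAddMonoidHom,
    (hg.prodMap surjective_id).comp e.surjective⟩

end Finsupp

section Torsion

variable {G : Type*} [AddMonoid G]

theorem zmod_two_prod_one_zero_ne_zero : ((1 : ZMod 2), (0 : G)) ≠ 0 :=
  fun h => one_ne_zero (congrArg Prod.fst h)

theorem two_nsmul_zmod_two_prod_one_zero : (2 : ℕ) • ((1 : ZMod 2), (0 : G)) = 0 :=
  Prod.ext (show (2 : ℕ) • (1 : ZMod 2) = 0 by decide) (nsmul_zero 2)

theorem not_isAddTorsionFree_zmod_two_prod : ¬ IsAddTorsionFree (ZMod 2 × G) := fun _ =>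
  zmod_two_prod_one_zero_ne_zero
    ((nsmul_eq_zero_iff_right (M := ZMod 2 × G) two_ne_zero).mp two_nsmul_zmod_two_prod_one_zero)

theorem isEmpty_addEquiv_zmod_two_prod {A : Type*} [AddMonoid A] [IsAddTorsionFree A] :
    IsEmpty (A ≃+ ZMod 2 × G) :=
  ⟨fun e => not_isAddTorsionFree_zmod_two_prod
    (Injective.isAddTorsionFree e.symm.toAddMonoidHom e.symm.injective)⟩

end Torsion

namespace ExistsSurjHomFromSubgroup

variable {A B : Type} [AddCommGroup A] [AddCommGroup B]

theorem of_surjective (f : A →+ B) (hf : Surjective f) : ExistsSurjHomFromSubgroup A B :=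
  ⟨⊤, f.comp (⊤ : AddSubgroup A).subtype, fun b =>
    let ⟨a, ha⟩ := hf b
    ⟨⟨a, trivial⟩, ha⟩⟩

theorem of_subsingleton [Subsingleton B] : ExistsSurjHomFromSubgroup A B :=
  ⟨⊤, 0, fun _ => ⟨0, Subsingleton.elim _ _⟩⟩

end ExistsSurjHomFromSubgroup

theorem subsingleton_singularHomology_of_isEmpty (G : Type) [AddCommGroup G] (k : ℤ)
    (T : TopCat.{0}) [IsEmpty T] : Subsingleton ((singularHomologyFunctor G k).obj T) := by
  have : ∀ m, IsEmpty ((TopCat.toSSet.obj T).obj m) := fun m =>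
    ⟨fun σ => IsEmpty.false (TopCat.toSSetObjEquiv T m σ (Classical.arbitrary _))⟩
  unfold singularHomologyFunctor
  split_ifs
  · refine AddCommGrpCat.isZero_iff_subsingleton.mp
      (ShortComplex.isZero_homology_of_isZero_X₂ _ ?_)
    exact AddCommGrpCat.isZero_iff_subsingleton.mpr
      (inferInstanceAs (Subsingleton ((TopCat.toSSet.obj T).obj _ →₀ G)))
  · exact inferInstanceAs (Subsingleton PUnit)

section PersistentHomology

variable {G : Type} [AddCommGroup G] (k : ℤ) {n : ℕ} {X : Type} [TopologicalSpace X]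
  (φ : X → Fin n → ℝ) {u v : Fin n → ℝ}

theorem subsingleton_persistentHomologyGroup_of_isEmpty (h : ∀ i, u i ≤ v i)
    [IsEmpty (sublevelSet φ u)] : Subsingleton (persistentHomologyGroup G k φ h) := by
  have : IsEmpty (sublevelTop φ u) := inferInstanceAs (IsEmpty (sublevelSet φ u))
  have := subsingleton_singularHomology_of_isEmpty G k (sublevelTop φ u)
  constructor
  rintro ⟨_, a, rfl⟩ ⟨_, b, rfl⟩
  rw [Subsingleton.elim a b]

theorem isIso_sublevelIncl_of_sublevelSet_eq_univ (hu : sublevelSet φ u = Set.univ)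
    (h : ∀ i, u i ≤ v i) : IsIso (sublevelIncl φ h) :=
  ⟨TopCat.ofHom ⟨Set.inclusion (hu ▸ Set.subset_univ _), continuous_inclusion _⟩,
    by ext; rfl, by ext; rfl⟩

noncomputable def persistentHomologyGroupEquivOfSublevelSetEqUniv
    (hu : sublevelSet φ u = Set.univ) (h : ∀ i, u i ≤ v i) :
    persistentHomologyGroup G k φ h ≃+ (singularHomologyFunctor G k).obj (TopCat.of X) :=
  have hv : sublevelSet φ v = Set.univ :=
    Set.eq_univ_of_univ_subset (hu ▸ fun _ hx i => (hx i).trans (h i))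
  have := isIso_sublevelIncl_of_sublevelSet_eq_univ φ hu h
  let F := singularHomologyFunctor G k
  (AddEquiv.ofBijective (F.map (sublevelIncl φ h)).hom.range.subtype
      ⟨Subtype.val_injective, fun y =>
        ⟨⟨y, (ConcreteCategory.bijective_of_isIso (F.map (sublevelIncl φ h))).2 y⟩, rfl⟩⟩).trans
    (F.mapIso (TopCat.isoOfHomeo ((Homeomorph.setCongr hv).trans
      (Homeomorph.Set.univ X)))).addCommGroupIsoToAddEquiv

end PersistentHomology

theorem sublevelSet_const_eq_univ {n : ℕ} {X : Type} {c u : Fin n → ℝ} (hu : ∀ i, c i ≤ u i) :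
    sublevelSet (fun _ : X => c) u = Set.univ :=
  Set.eq_univ_of_forall fun _ => hu

theorem isEmpty_sublevelSet_const {n : ℕ} {X : Type} {c u : Fin n → ℝ} (hu : ¬ ∀ i, c i ≤ u i) :
    IsEmpty (sublevelSet (fun _ : X => c) u) :=
  ⟨fun x => hu x.2⟩

section ConstantFiltration

variable {G : Type} [AddCommGroup G] {k : ℤ} {n : ℕ} {X Y : Type}
  [TopologicalSpace X] [TopologicalSpace Y]

theorem existsSurjHomFromSubgroup_persistentHomologyGroup_const (c : Fin n → ℝ)
    (f : (singularHomologyFunctor G k).obj (TopCat.of X) →+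
      (singularHomologyFunctor G k).obj (TopCat.of Y))
    (hf : Surjective f) {u v u' v' : Fin n → ℝ} (h : ∀ i, u i ≤ v i) (h' : ∀ i, u' i ≤ v' i)
    -- `u'` is `u - ε` for `ε = 0`, which is not definitionally `u`
    (hu : (∀ i, c i ≤ u' i) → ∀ i, c i ≤ u i) :
    ExistsSurjHomFromSubgroup (persistentHomologyGroup G k (fun _ : X => c) h)
      (persistentHomologyGroup G k (fun _ : Y => c) h') := by
  by_cases hu' : ∀ i, c i ≤ u' i
  · let eX := persistentHomologyGroupEquivOfSublevelSetEqUniv (G := G) k (fun _ : X => c)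
      (sublevelSet_const_eq_univ (hu hu')) h
    let eY := persistentHomologyGroupEquivOfSublevelSetEqUniv (G := G) k (fun _ : Y => c)
      (sublevelSet_const_eq_univ hu') h'
    exact .of_surjective (eY.symm.toAddMonoidHom.comp (f.comp eX.toAddMonoidHom))
      (eY.symm.surjective.comp (hf.comp eX.surjective))
  · have := isEmpty_sublevelSet_const (X := Y) hu'
    have := subsingleton_persistentHomologyGroup_of_isEmpty (G := G) k (fun _ : Y => c) h'
    exact .of_subsingleton

theorem dT_const_eq_zero (c : Fin n → ℝ)
    (f : (singularHomologyFunctor G k).obj (TopCat.of X) →+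
      (singularHomologyFunctor G k).obj (TopCat.of Y)) (hf : Surjective f)
    (g : (singularHomologyFunctor G k).obj (TopCat.of Y) →+
      (singularHomologyFunctor G k).obj (TopCat.of X)) (hg : Surjective g) :
    dT G k (fun _ : X => c) (fun _ : Y => c) = 0 := by
  have h_zero_mem : (0 : ℝ) ∈ dTSet G k (fun _ : X => c) (fun _ : Y => c) := by
    refine ⟨le_rfl, fun u v h => ?_⟩
    have hu : (∀ i, c i ≤ u i - 0) → ∀ i, c i ≤ u i := by simp only [sub_zero, imp_self]
    exact ⟨existsSurjHomFromSubgroup_persistentHomologyGroup_const c f hf _ _ hu,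
      existsSurjHomFromSubgroup_persistentHomologyGroup_const c g hg _ _ hu⟩
  exact nonpos_iff_eq_zero.mp (sInf_le ⟨0, h_zero_mem, ENNReal.ofReal_zero⟩)

end ConstantFiltration

/-- **`d_T` is not a distance.** Let `A = ⨁_{i∈ℕ} ℤ` and `B = ℤ/2ℤ ⊕ A`. There exist
surjective homomorphisms from `A` onto `B` and from `B` onto `A`, but `A` and `B` are not
isomorphic (`B` has a nonzero element of finite order while `A` is torsion-free).
Consequently, two topological spaces whose `k`-th homology groups are `A` and `B`,
each endowed with the identically zero filtering function, have `d_T = 0` between their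
`k`-th persistent homology groups although these groups are not isomorphic. -/
theorem dT_not_a_distance :
    (∃ f : (ℕ →₀ ℤ) →+ (ZMod 2 × (ℕ →₀ ℤ)), Function.Surjective f) ∧
    (∃ g : (ZMod 2 × (ℕ →₀ ℤ)) →+ (ℕ →₀ ℤ), Function.Surjective g) ∧
    (∃ b : ZMod 2 × (ℕ →₀ ℤ), b ≠ 0 ∧ ∃ m : ℕ, 0 < m ∧ m • b = 0) ∧
    (∀ a : ℕ →₀ ℤ, a ≠ 0 → ∀ m : ℕ, 0 < m → m • a ≠ 0) ∧
    IsEmpty ((ℕ →₀ ℤ) ≃+ (ZMod 2 × (ℕ →₀ ℤ))) ∧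
    ∀ (n : ℕ) (k : ℤ) (X Y : Type) (_ : TopologicalSpace X) (_ : TopologicalSpace Y),
      Nonempty (((singularHomologyFunctor ℤ k).obj (TopCat.of X)) ≃+ (ℕ →₀ ℤ)) →
      Nonempty (((singularHomologyFunctor ℤ k).obj (TopCat.of Y)) ≃+
        (ZMod 2 × (ℕ →₀ ℤ))) →
      dT ℤ k (fun _ : X => (0 : Fin n → ℝ)) (fun _ : Y => (0 : Fin n → ℝ)) = 0 := by
  obtain ⟨f, hf⟩ := Finsupp.exists_surjective_nat_prod (Int.castAddHom (ZMod 2))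
    ZMod.intCast_surjective
  let g := AddMonoidHom.snd (ZMod 2) (ℕ →₀ ℤ)
  have hg : Surjective g := Prod.snd_surjective
  refine ⟨⟨f, hf⟩, ⟨g, hg⟩, ⟨_, zmod_two_prod_one_zero_ne_zero, 2, two_pos,
    two_nsmul_zmod_two_prod_one_zero⟩, fun a ha m hm => smul_ne_zero hm.ne' ha,
    isEmpty_addEquiv_zmod_two_prod, ?_⟩
  rintro n k X Y _ _ ⟨eX⟩ ⟨eY⟩
  exact dT_const_eq_zero 0
    (eY.symm.toAddMonoidHom.comp (f.comp eX.toAddMonoidHom))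
    (eY.symm.surjective.comp (hf.comp eX.surjective))
    (eX.symm.toAddMonoidHom.comp (g.comp eY.toAddMonoidHom))
    (eX.symm.surjective.comp (hg.comp eY.surjective))
end

section
/- Let S² = {(x,y,z) ∈ ℝ³ : x²+y²+z² = 1}, let 𝒢 be the space of unordered pairs {p,q} of points of S² endowed with the Hausdorff distance, and let φ_𝒢({p,q}) = −‖p−q‖. For v < 0, let 𝒢_v = {{p,q} ∈ 𝒢 : ‖p−q‖ ≥ −v} be the sublevel set of φ_𝒢 at level v, and let f: 𝒢_v → ℝP² be the continuous map taking each unordered pair {p,q} (with p ≠ q, which holds since v < 0) to the direction of the line through p and q, viewed as a point of the real projective plane ℝP². Then there exists v₀ < 0 such that for every v with v₀ < v < 0, the map f is a homotopy equivalence, with homotopy inverse the map g: ℝP² → 𝒢_v taking each direction w to the unordered pair of the two points at which the line through the origin with direction w meets S². -/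
open CategoryTheory

/-- The Euclidean space `ℝ³`. -/
abbrev E3 : Type := EuclideanSpace ℝ (Fin 3)

/-- The unit sphere `S² ⊆ ℝ³`. -/
abbrev Sphere2 : Type := Metric.sphere (0 : E3) 1

/-- The space `𝒢` of unordered pairs of points of `S²`. -/
def GraspSpace : Type := Sym2 Sphere2

/-- The map sending an unordered pair `{p,q}` of points of `S²` to the corresponding
(nonempty compact) subset `{p,q}` of `ℝ³`. -/
noncomputable def GraspSpace.toNC : GraspSpace → TopologicalSpace.NonemptyCompacts E3 :=
  Sym2.lift ⟨fun p q =>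
    ⟨⟨{(p : E3), (q : E3)}, ((Set.finite_singleton _).insert _).isCompact⟩,
      Set.insert_nonempty _ _⟩,
    fun p q => by
      apply TopologicalSpace.NonemptyCompacts.ext
      simp [Set.pair_comm (p : E3) (q : E3)]⟩

/-- `𝒢` is topologized by the Hausdorff distance between the corresponding subsets of `S²`:
its topology is induced by the embedding into the nonempty compact subsets of `ℝ³`, endowed
with the Hausdorff-distance metric. -/
noncomputable instance : TopologicalSpace GraspSpace :=
  TopologicalSpace.induced GraspSpace.toNC inferInstance

/-- The filtering function `φ_𝒢({p,q}) = −‖p−q‖` on the space of unordered pairs. -/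
noncomputable def graspCost : GraspSpace → ℝ :=
  Sym2.lift ⟨fun p q => -dist (p : E3) (q : E3), fun p q => by dsimp only; rw [dist_comm]⟩

/-- The sublevel set `𝒢_v = {{p,q} ∈ 𝒢 : φ_𝒢({p,q}) ≤ v}`. -/
def graspSublevel (v : ℝ) : Set GraspSpace := {g | graspCost g ≤ v}

/-- The antipodal relation on the sphere: `p ∼ q` iff `p = q` or `p = −q`. -/
def antipodalSetoid : Setoid Sphere2 where
  r p q := (p : E3) = q ∨ (p : E3) = -(q : E3)
  iseqv := by
    constructor
    · intro p; left; rfl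
    · rintro p q (h | h)
      · left; exact h.symm
      · right; rw [h, neg_neg]
    · rintro p q r (h1 | h1) (h2 | h2)
      · left; rw [h1, h2]
      · right; rw [h1, h2]
      · right; rw [h1, h2]
      · left; rw [h1, h2, neg_neg]

/-- The real projective plane `ℝP²`, represented as the set of unordered pairs `{p,−p}` of
antipodal points of `S²`, i.e. the quotient of the sphere by the antipodal relation. -/
def RP2 : Type := Quotient antipodalSetoid

noncomputable instance : TopologicalSpace RP2 :=
  inferInstanceAs (TopologicalSpace (Quotient antipodalSetoid))

/-- `f : 𝒢_v → ℝP²` is the map taking each unordered pair `{p,q}` to the direction of the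
line through `p` and `q`: the value of `f` at `{p,q}` is the class of a unit vector `w`
parallel to `p − q`. -/
def IsDirectionMap (v : ℝ) (f : C(↥(graspSublevel v), RP2)) : Prop :=
  ∀ (p q : Sphere2) (h : Sym2.mk p q ∈ graspSublevel v),
    ∃ (w : Sphere2) (c : ℝ), (w : E3) = c • ((p : E3) - (q : E3)) ∧
      f ⟨Sym2.mk p q, h⟩ = Quotient.mk antipodalSetoid w

/-- `g : ℝP² → 𝒢_v` is the map taking each direction `w` to the unordered pair of the two
points at which the line through the origin with direction `w` meets `S²`, i.e. `{w, −w}`. -/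
def IsAntipodalPairMap (v : ℝ) (g : C(RP2, ↥(graspSublevel v))) : Prop :=
  ∀ w : Sphere2, ((g (Quotient.mk antipodalSetoid w) : GraspSpace)) = Sym2.mk w (-w)

/-!
A pair `{p, q}` with `p ≠ q` is deformed to the antipodal pair `{u, -u}`, `u = (p - q)/‖p - q‖`,
by sliding each point along the great circle through `p` and `q`: at time `t` the points are the
normalisations of `(1 - t) u + t p` and `-(1 - t) u + t q`. Their difference stays a positive
multiple of `p - q` and its length never drops below `‖p - q‖`, so the deformation stays inside
`𝒢_v`; at `t = 0` it is `g ∘ f` and at `t = 1` the identity. Conversely `f ∘ g` is the identity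
on `ℝP²`. Maps out of `𝒢_v` are built on the compact space of ordered pairs lying over `𝒢_v`,
which maps onto the Hausdorff space `𝒢_v` by a quotient map.
-/

open NormedSpace Metric unitInterval

section Chord

variable {E : Type*} [NormedAddCommGroup E] [InnerProductSpace ℝ E] {p q : E} {t : ℝ}

lemma Continuous.normalize {X : Type*} [TopologicalSpace X] {f : X → E} (hf : Continuous f)
    (h₀ : ∀ x, f x ≠ 0) : Continuous fun x => normalize (f x) :=
  (hf.norm.inv₀ fun x => norm_ne_zero_iff.2 (h₀ x)).smul hf

noncomputable def slideVec (t : ℝ) (p q : E) : E := (1 - t) • normalize (p - q) + t • p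

noncomputable def slide (t : ℝ) (p q : E) : E := normalize (slideVec t p q)

lemma slide_zero (p q : E) : slide 0 p q = normalize (p - q) := by
  simp [slide, slideVec, normalize_normalize]

lemma slide_one (hp : ‖p‖ = 1) (q : E) : slide 1 p q = p := by
  simp [slide, slideVec, normalize_eq_self_of_norm_eq_one hp]

lemma inner_normalize_sub_left (hp : ‖p‖ = 1) (hq : ‖q‖ = 1) :
    inner ℝ (normalize (p - q)) p = ‖p - q‖ / 2 := by
  have h := norm_sub_sq_real p q
  rw [hp, hq] at h
  rw [NormedSpace.normalize, real_inner_smul_left, inner_sub_left, real_inner_self_eq_norm_sq, hp,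
    real_inner_comm]
  have h' : (1 : ℝ) ^ 2 - inner ℝ p q = ‖p - q‖ * ‖p - q‖ / 2 := by linarith
  rw [h', ← mul_div_assoc, ← mul_assoc, inv_mul_mul_self]

lemma norm_slideVec_sq (hp : ‖p‖ = 1) (hq : ‖q‖ = 1) (hpq : p ≠ q) :
    ‖slideVec t p q‖ ^ 2 = (1 - t) ^ 2 + t ^ 2 + (1 - t) * t * ‖p - q‖ := by
  rw [slideVec, norm_add_sq_real, real_inner_smul_left, real_inner_smul_right,
    inner_normalize_sub_left hp hq, norm_smul, norm_smul, norm_normalize (sub_ne_zero.2 hpq), hp,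
    mul_pow, mul_pow, Real.norm_eq_abs, Real.norm_eq_abs, sq_abs, sq_abs]
  ring

lemma slideVec_ne_zero (hp : ‖p‖ = 1) (hq : ‖q‖ = 1) (hpq : p ≠ q) (ht₀ : 0 ≤ t) (ht₁ : t ≤ 1) :
    slideVec t p q ≠ 0 := by
  intro h
  have h0 := norm_slideVec_sq (t := t) hp hq hpq
  rw [h, norm_zero] at h0
  nlinarith [mul_nonneg (mul_nonneg (sub_nonneg.2 ht₁) ht₀) (norm_nonneg (p - q))]

lemma norm_slide (hp : ‖p‖ = 1) (hq : ‖q‖ = 1) (hpq : p ≠ q) (ht₀ : 0 ≤ t) (ht₁ : t ≤ 1) :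
    ‖slide t p q‖ = 1 :=
  norm_normalize (slideVec_ne_zero hp hq hpq ht₀ ht₁)

lemma norm_slideVec_comm (hp : ‖p‖ = 1) (hq : ‖q‖ = 1) (hpq : p ≠ q) :
    ‖slideVec t q p‖ = ‖slideVec t p q‖ := by
  refine (pow_left_inj₀ (norm_nonneg _) (norm_nonneg _) two_ne_zero).1 ?_
  rw [norm_slideVec_sq hq hp hpq.symm, norm_slideVec_sq hp hq hpq, norm_sub_rev]

lemma slide_sub_slide (hp : ‖p‖ = 1) (hq : ‖q‖ = 1) (hpq : p ≠ q) :
    slide t p q - slide t q p =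
      (‖slideVec t p q‖⁻¹ * (2 * (1 - t) * ‖p - q‖⁻¹ + t)) • (p - q) := by
  rw [slide, slide, NormedSpace.normalize, NormedSpace.normalize, norm_slideVec_comm hp hq hpq,
    ← smul_sub, mul_smul, slideVec, slideVec, NormedSpace.normalize, NormedSpace.normalize,
    norm_sub_rev q p]
  congr 1
  module

lemma norm_sub_le_norm_slide_sub_slide (hp : ‖p‖ = 1) (hq : ‖q‖ = 1) (ht₀ : 0 ≤ t)
    (ht₁ : t ≤ 1) : ‖p - q‖ ≤ ‖slide t p q - slide t q p‖ := by
  rcases eq_or_ne p q with rfl | hpq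
  · simp
  set a := ‖slideVec t p q‖
  set d := ‖p - q‖
  have hd : 0 < d := norm_pos_iff.2 (sub_ne_zero.2 hpq)
  have hd₂ : d ≤ 2 := (norm_sub_le p q).trans (by rw [hp, hq]; norm_num)
  have ha : 0 < a := norm_pos_iff.2 (slideVec_ne_zero hp hq hpq ht₀ ht₁)
  have ha_sq : a ^ 2 = (1 - t) ^ 2 + t ^ 2 + (1 - t) * t * d := norm_slideVec_sq hp hq hpq
  have hb : 0 ≤ (1 - t) + t * d := by nlinarith [mul_nonneg ht₀ hd.le]
  -- `(2(1-t) + t d)² - (a d)² = (1-t)(4-d²)((1-t) + t d) ≥ 0`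
  have hkey : d * a ≤ 2 * (1 - t) + t * d := by
    refine abs_le_of_sq_le_sq' ?_ (by nlinarith) |>.2
    have : 0 ≤ (1 - t) * (4 - d ^ 2) * ((1 - t) + t * d) :=
      mul_nonneg (mul_nonneg (by linarith) (by nlinarith)) hb
    nlinarith
  rw [slide_sub_slide hp hq hpq, norm_smul, Real.norm_eq_abs, abs_of_nonneg (by positivity)]
  calc d = a⁻¹ * (d * a) := by field_simp
    _ ≤ a⁻¹ * (2 * (1 - t) + t * d) := by gcongr
    _ = a⁻¹ * (2 * (1 - t) * d⁻¹ + t) * d := by field_simp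

lemma slide_mem_sphere {p q : sphere (0 : E) 1} (hpq : p ≠ q) (t : I) :
    slide (t : ℝ) (p : E) q ∈ sphere (0 : E) 1 :=
  mem_sphere_zero_iff_norm.2 <| norm_slide (norm_eq_of_mem_sphere p) (norm_eq_of_mem_sphere q)
    (Subtype.coe_ne_coe.2 hpq) t.2.1 t.2.2

lemma Continuous.slide {X : Type*} [TopologicalSpace X] {t : X → I} {p q : X → sphere (0 : E) 1}
    (ht : Continuous t) (hp : Continuous p) (hq : Continuous q) (hpq : ∀ x, p x ≠ q x) :
    Continuous fun x => slide (t x) (p x : E) (q x) := by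
  have ht' : Continuous fun x => (t x : ℝ) := continuous_subtype_val.comp ht
  have hp' : Continuous fun x => (p x : E) := continuous_subtype_val.comp hp
  have hq' : Continuous fun x => (q x : E) := continuous_subtype_val.comp hq
  refine Continuous.normalize ?_ fun x => slideVec_ne_zero (norm_eq_of_mem_sphere (p x))
    (norm_eq_of_mem_sphere (q x)) (Subtype.coe_ne_coe.2 (hpq x)) (t x).2.1 (t x).2.2
  exact ((continuous_const.sub ht').smul ((hp'.sub hq').normalize
    fun x => sub_ne_zero.2 (Subtype.coe_ne_coe.2 (hpq x)))).add (ht'.smul hp')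

end Chord

lemma Metric.hausdorffDist_pair_le {X : Type*} [PseudoMetricSpace X] (p q p' q' : X) :
    hausdorffDist {p, q} {p', q'} ≤ max (dist p p') (dist q q') := by
  refine hausdorffDist_le_of_mem_dist (le_max_of_le_left dist_nonneg) ?_ ?_
  · rintro x (rfl | rfl)
    · exact ⟨p', .inl rfl, le_max_left _ _⟩
    · exact ⟨q', .inr rfl, le_max_right _ _⟩
  · rintro x (rfl | rfl)
    · exact ⟨p, .inl rfl, by rw [dist_comm]; exact le_max_left _ _⟩
    · exact ⟨q, .inr rfl, by rw [dist_comm]; exact le_max_right _ _⟩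

lemma dist_coe_neg_sphere {E : Type*} [NormedAddCommGroup E] [NormedSpace ℝ E]
    (w : sphere (0 : E) 1) : dist (w : E) ((-w : sphere (0 : E) 1) : E) = 2 := by
  rw [coe_neg_sphere, dist_eq_norm, sub_neg_eq_add, ← two_smul ℝ, norm_smul,
    norm_eq_of_mem_sphere, mul_one, Real.norm_two]

lemma RP2.mk_eq_mk_of_coe_eq_smul {w w' : Sphere2} {c : ℝ} (h : (w : E3) = c • (w' : E3)) :
    (Quotient.mk antipodalSetoid w : RP2) = Quotient.mk antipodalSetoid w' := by
  have hc : |c| = 1 := by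
    simpa [norm_eq_of_mem_sphere, norm_smul] using (congrArg norm h).symm
  refine Quotient.sound ?_
  rcases (abs_eq zero_le_one).1 hc with rfl | rfl
  · exact .inl (by rw [h, one_smul])
  · exact .inr (by rw [h, neg_one_smul])

lemma IsDirectionMap.comp_eq_id {v : ℝ} {f : C(graspSublevel v, RP2)}
    {g : C(RP2, graspSublevel v)} (hf : IsDirectionMap v f) (hg : IsAntipodalPairMap v g) :
    f.comp g = ContinuousMap.id RP2 := by
  ext ⟨w⟩
  change f (g (Quotient.mk _ w)) = Quotient.mk _ w
  have hmem : s(w, -w) ∈ graspSublevel v := hg w ▸ (g (Quotient.mk _ w)).2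
  obtain ⟨w', c, hw', hfw⟩ := hf w (-w) hmem
  rw [show g (Quotient.mk _ w) = ⟨_, hmem⟩ from Subtype.ext (hg w), hfw]
  refine RP2.mk_eq_mk_of_coe_eq_smul (c := 2 * c) ?_
  rw [hw', coe_neg_sphere, sub_neg_eq_add, ← two_smul ℝ, smul_smul, mul_comm]

namespace GraspSpace

open TopologicalSpace Topology

def mk (x : Sphere2 × Sphere2) : GraspSpace := s(x.1, x.2)

lemma continuous_mk : Continuous mk := by
  have hL : LipschitzWith 1 (toNC ∘ mk) :=
    LipschitzWith.of_dist_le_mul fun x y => by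
      rw [NNReal.coe_one, one_mul, NonemptyCompacts.dist_eq, Prod.dist_eq]
      exact hausdorffDist_pair_le _ _ _ _
  exact continuous_induced_rng.2 hL.continuous

lemma toNC_injective : Function.Injective toNC := by
  refine fun g h => Sym2.inductionOn₂ g h fun p q p' q' hpq => ?_
  have hset : ({(p : E3), (q : E3)} : Set E3) = {(p' : E3), (q' : E3)} :=
    congrArg (fun K : NonemptyCompacts E3 => (K : Set E3)) hpq
  simp only [Set.pair_eq_pair_iff, Subtype.coe_inj] at hset
  exact Sym2.eq_iff.2 hset

instance : T2Space GraspSpace := (IsEmbedding.mk ⟨rfl⟩ toNC_injective).t2Space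

variable {v : ℝ}

lemma mk_surjective : Function.Surjective mk := by
  intro g
  induction g using Sym2.ind with
  | _ p q => exact ⟨(p, q), rfl⟩

lemma mk_eq_mk_iff {x y : Sphere2 × Sphere2} : mk x = mk y ↔ x = y ∨ x = y.swap :=
  Sym2.eq_iff.trans <| by simp only [Prod.ext_iff, Prod.fst_swap, Prod.snd_swap]

def orderedSublevel (v : ℝ) : Set (Sphere2 × Sphere2) := mk ⁻¹' graspSublevel v

lemma mem_orderedSublevel {x : Sphere2 × Sphere2} :
    x ∈ orderedSublevel v ↔ -dist (x.1 : E3) x.2 ≤ v := Iff.rfl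

lemma isClosed_orderedSublevel (v : ℝ) : IsClosed (orderedSublevel v) :=
  isClosed_le ((continuous_subtype_val.comp continuous_fst).dist
    (continuous_subtype_val.comp continuous_snd)).neg continuous_const

instance (v : ℝ) : CompactSpace (orderedSublevel v) :=
  isCompact_iff_compactSpace.mp (isClosed_orderedSublevel v).isCompact

lemma fst_ne_snd_of_mem_orderedSublevel (hv : v < 0) {x : Sphere2 × Sphere2}
    (hx : x ∈ orderedSublevel v) : x.1 ≠ x.2 := by
  rintro h
  rw [mem_orderedSublevel, h, dist_self] at hx
  linarith

lemma swap_mem_orderedSublevel {x : Sphere2 × Sphere2} (hx : x ∈ orderedSublevel v) :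
    x.swap ∈ orderedSublevel v := by
  rwa [mem_orderedSublevel, dist_comm]

lemma coe_sub_ne_zero_of_mem_orderedSublevel (hv : v < 0) {x : Sphere2 × Sphere2}
    (hx : x ∈ orderedSublevel v) : (x.1 : E3) - x.2 ≠ 0 :=
  sub_ne_zero.2 (Subtype.coe_ne_coe.2 (fst_ne_snd_of_mem_orderedSublevel hv hx))

def toSublevel (v : ℝ) : C(orderedSublevel v, graspSublevel v) :=
  ⟨(graspSublevel v).restrictPreimage mk, continuous_mk.restrictPreimage⟩

lemma surjective_toSublevel (v : ℝ) : Function.Surjective (toSublevel v) :=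
  Set.restrictPreimage_surjective _ mk_surjective

lemma isQuotientMap_toSublevel (v : ℝ) : IsQuotientMap (toSublevel v) :=
  (toSublevel v).continuous.isClosedMap.isQuotientMap (toSublevel v).continuous
    (surjective_toSublevel v)

lemma isQuotientMap_prodMap_toSublevel (v : ℝ) :
    IsQuotientMap ((ContinuousMap.id I).prodMap (toSublevel v)) :=
  have hc := ((ContinuousMap.id I).prodMap (toSublevel v)).continuous
  hc.isClosedMap.isQuotientMap hc (Function.surjective_id.prodMap (surjective_toSublevel v))

noncomputable def chordDir (hv : v < 0) (x : orderedSublevel v) : Sphere2 :=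
  ⟨normalize ((x.1.1 : E3) - x.1.2),
    mem_sphere_zero_iff_norm.2 (norm_normalize (coe_sub_ne_zero_of_mem_orderedSublevel hv x.2))⟩

lemma continuous_chordDir (hv : v < 0) : Continuous (chordDir hv) :=
  Continuous.subtype_mk (Continuous.normalize
    ((continuous_subtype_val.comp (continuous_fst.comp continuous_subtype_val)).sub
      (continuous_subtype_val.comp (continuous_snd.comp continuous_subtype_val)))
    fun x => coe_sub_ne_zero_of_mem_orderedSublevel hv x.2) _

lemma mk_neg_mem_orderedSublevel (hv : -2 ≤ v) (w : Sphere2) : (w, -w) ∈ orderedSublevel v := by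
  rw [mem_orderedSublevel, dist_coe_neg_sphere]
  linarith

noncomputable def antipodalPairMap (hv : -2 ≤ v) : C(RP2, graspSublevel v) where
  toFun := Quotient.lift (fun w => ⟨mk (w, -w), mk_neg_mem_orderedSublevel hv w⟩) <| by
    rintro w w' (h | h)
    · rw [Subtype.coe_injective h]
    · obtain rfl : w = -w' := Subtype.ext (by rw [h, coe_neg_sphere])
      exact Subtype.ext ((congrArg (fun u => mk (-w', u)) (neg_neg w')).trans Sym2.eq_swap)
  continuous_toFun := continuous_quot_lift _ <|
    (continuous_mk.comp (continuous_id.prodMk continuous_neg)).subtype_mk _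

lemma isAntipodalPairMap_antipodalPairMap (hv : -2 ≤ v) :
    IsAntipodalPairMap v (antipodalPairMap hv) := fun _ => rfl

lemma chordDir_swap (hv : v < 0) {x : Sphere2 × Sphere2} (hx : x ∈ orderedSublevel v) :
    (chordDir hv ⟨x.swap, swap_mem_orderedSublevel hx⟩ : E3) = -chordDir hv ⟨x, hx⟩ := by
  simp only [chordDir, Prod.fst_swap, Prod.snd_swap, ← normalize_neg, neg_sub]

noncomputable def chordLine (hv : v < 0) : C(orderedSublevel v, RP2) :=
  ⟨fun x => Quotient.mk antipodalSetoid (chordDir hv x),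
    continuous_quot_mk.comp (continuous_chordDir hv)⟩

lemma factorsThrough_chordLine (hv : v < 0) :
    Function.FactorsThrough (chordLine hv) (toSublevel v) := by
  rintro ⟨x, hx⟩ ⟨y, hy⟩ h
  rcases mk_eq_mk_iff.1 (congrArg Subtype.val h) with rfl | rfl
  · rfl
  · exact Quotient.sound (.inr (chordDir_swap hv hy))

noncomputable def directionMap (hv : v < 0) : C(graspSublevel v, RP2) :=
  (isQuotientMap_toSublevel v).lift (chordLine hv) (factorsThrough_chordLine hv)

lemma directionMap_toSublevel (hv : v < 0) (x : orderedSublevel v) :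
    directionMap hv (toSublevel v x) = Quotient.mk antipodalSetoid (chordDir hv x) :=
  DFunLike.congr_fun
    ((isQuotientMap_toSublevel v).lift_comp (chordLine hv) (factorsThrough_chordLine hv)) x

lemma isDirectionMap_directionMap (hv : v < 0) : IsDirectionMap v (directionMap hv) :=
  fun p q h => ⟨_, ‖(p : E3) - q‖⁻¹, rfl, directionMap_toSublevel hv ⟨(p, q), h⟩⟩

lemma coe_comp_apply_toSublevel (hv : v < 0) {f : C(graspSublevel v, RP2)}
    {g : C(RP2, graspSublevel v)} (hf : IsDirectionMap v f) (hg : IsAntipodalPairMap v g)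
    (x : orderedSublevel v) :
    (g.comp f (toSublevel v x) : GraspSpace) = mk (chordDir hv x, -chordDir hv x) := by
  obtain ⟨w, c, hw, hfw⟩ := hf x.1.1 x.1.2 x.2
  have hwu : Quotient.mk antipodalSetoid w = Quotient.mk antipodalSetoid (chordDir hv x) := by
    refine RP2.mk_eq_mk_of_coe_eq_smul (c := c * ‖(x.1.1 : E3) - x.1.2‖) ?_
    rw [hw, mul_smul, chordDir, norm_smul_normalize]
  exact (congrArg (fun y => (g y : GraspSpace)) (hfw.trans hwu)).trans (hg _)

noncomputable def slidePair (hv : v < 0) (z : I × orderedSublevel v) : orderedSublevel v :=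
  have hpq := fst_ne_snd_of_mem_orderedSublevel hv z.2.2
  ⟨(⟨slide z.1 z.2.1.1 z.2.1.2, slide_mem_sphere hpq z.1⟩,
      ⟨slide z.1 z.2.1.2 z.2.1.1, slide_mem_sphere hpq.symm z.1⟩), by
    have hx := z.2.2
    have := norm_sub_le_norm_slide_sub_slide (norm_eq_of_mem_sphere z.2.1.1)
      (norm_eq_of_mem_sphere z.2.1.2) z.1.2.1 z.1.2.2
    rw [mem_orderedSublevel, dist_eq_norm] at hx ⊢
    linarith⟩

lemma continuous_slidePair (hv : v < 0) : Continuous (slidePair hv) := by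
  have hp : Continuous fun z : I × orderedSublevel v => z.2.1.1 :=
    continuous_fst.comp (continuous_subtype_val.comp continuous_snd)
  have hq : Continuous fun z : I × orderedSublevel v => z.2.1.2 :=
    continuous_snd.comp (continuous_subtype_val.comp continuous_snd)
  have hpq z := fst_ne_snd_of_mem_orderedSublevel hv (z : I × orderedSublevel v).2.2
  exact Continuous.subtype_mk
    (((continuous_fst.slide hp hq hpq).subtype_mk _).prodMk
      ((continuous_fst.slide hq hp fun z => (hpq z).symm).subtype_mk _)) _

lemma slidePair_zero (hv : v < 0) (x : orderedSublevel v) :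
    (slidePair hv (0, x)).1 = (chordDir hv x, -chordDir hv x) := by
  refine Prod.ext (Subtype.ext ?_) (Subtype.ext ?_)
  · exact slide_zero _ _
  · rw [coe_neg_sphere, ← chordDir_swap hv x.2]
    exact slide_zero _ _

lemma slidePair_one (hv : v < 0) (x : orderedSublevel v) : slidePair hv (1, x) = x :=
  Subtype.ext <| Prod.ext (Subtype.ext (slide_one (norm_eq_of_mem_sphere _) _))
    (Subtype.ext (slide_one (norm_eq_of_mem_sphere _) _))

noncomputable def slideLift (hv : v < 0) : C(I × orderedSublevel v, graspSublevel v) :=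
  (toSublevel v).comp ⟨slidePair hv, continuous_slidePair hv⟩

lemma factorsThrough_slideLift (hv : v < 0) :
    Function.FactorsThrough (slideLift hv) ((ContinuousMap.id I).prodMap (toSublevel v)) := by
  rintro ⟨t, x, hx⟩ ⟨t', y, hy⟩ h
  obtain ⟨rfl, hxy⟩ := Prod.ext_iff.1 h
  rcases mk_eq_mk_iff.1 (congrArg Subtype.val hxy) with rfl | rfl
  · rfl
  · exact Subtype.ext (mk_eq_mk_iff.2 (.inr rfl))

noncomputable def slideMap (hv : v < 0) : C(I × graspSublevel v, graspSublevel v) :=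
  (isQuotientMap_prodMap_toSublevel v).lift (slideLift hv) (factorsThrough_slideLift hv)

lemma slideMap_toSublevel (hv : v < 0) (t : I) (x : orderedSublevel v) :
    slideMap hv (t, toSublevel v x) = toSublevel v (slidePair hv (t, x)) :=
  DFunLike.congr_fun
    ((isQuotientMap_prodMap_toSublevel v).lift_comp (slideLift hv) (factorsThrough_slideLift hv))
    (t, x)

noncomputable def slideHomotopy (hv : v < 0) {f : C(graspSublevel v, RP2)}
    {g : C(RP2, graspSublevel v)} (hf : IsDirectionMap v f) (hg : IsAntipodalPairMap v g) :
    (g.comp f).Homotopy (ContinuousMap.id (graspSublevel v)) where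
  toContinuousMap := slideMap hv
  map_zero_left y := by
    obtain ⟨x, rfl⟩ := surjective_toSublevel v y
    refine Subtype.ext ?_
    rw [ContinuousMap.toFun_eq_coe, slideMap_toSublevel, coe_comp_apply_toSublevel hv hf hg]
    exact congrArg mk (slidePair_zero hv x)
  map_one_left y := by
    obtain ⟨x, rfl⟩ := surjective_toSublevel v y
    rw [ContinuousMap.toFun_eq_coe, slideMap_toSublevel, slidePair_one]
    rfl

end GraspSpace

/-- There exists `v₀ < 0` such that for every `v` with `v₀ < v < 0` the map
`f : 𝒢_v → ℝP²` taking each unordered pair `{p,q}` to the direction of the line through `p`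
and `q` is a homotopy equivalence, with homotopy inverse the map `g : ℝP² → 𝒢_v` taking each
direction `w` to the unordered pair of the two points at which the line through the origin
with direction `w` meets `S²`. -/
theorem direction_map_homotopyEquiv :
    ∃ v₀ : ℝ, v₀ < 0 ∧ ∀ v : ℝ, v₀ < v → v < 0 →
      (∃ f : C(↥(graspSublevel v), RP2), IsDirectionMap v f) ∧
      (∃ g : C(RP2, ↥(graspSublevel v)), IsAntipodalPairMap v g) ∧
      ∀ (f : C(↥(graspSublevel v), RP2)) (g : C(RP2, ↥(graspSublevel v))),
        IsDirectionMap v f → IsAntipodalPairMap v g →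
          (f.comp g).Homotopic (ContinuousMap.id RP2) ∧
          (g.comp f).Homotopic (ContinuousMap.id ↥(graspSublevel v)) := by
  refine ⟨-2, by norm_num, fun v hv₂ hv => ⟨?_, ?_, fun f g hf hg => ⟨?_, ?_⟩⟩⟩
  · exact ⟨_, GraspSpace.isDirectionMap_directionMap hv⟩
  · exact ⟨_, GraspSpace.isAntipodalPairMap_antipodalPairMap hv₂.le⟩
  · rw [hf.comp_eq_id hg]
  · exact ⟨GraspSpace.slideHomotopy hv hf hg⟩
end
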